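/- arXiv:2507.00140 — 3 statements merged into one kernel-verified Lean document; each statement's English description precedes it below -/
import Mathlib

section
/- Pointwise existence and uniqueness of the Kosmann derivative: for every symmetric bilinear form h on V there exists a unique linear map K : V → ℝ^{d+1} such that (i) the bilinear form (v,w) ↦ (K v)ᵀ η (e w) on V is symmetric, and (ii) h(v,w) = (K v)ᵀ η (e w) + (e v)ᵀ η (K w) for all v, w ∈ V. (This is the linear-algebraic content, applied pointwise with h = L_ξ g, of the paper's Proposition that the Kosmann Lie derivative of a coframe exists, is unique, and is completely determined by the coframe via the condition L_ξ g = 2⟨L^K_ξ e, e⟩.) -/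
open Matrix

/-- The Minkowski matrix `η = diag(-1, 1, …, 1)` of size `(d+1) × (d+1)`. -/
def minkowski (d : ℕ) : Matrix (Fin (d + 1)) (Fin (d + 1)) ℝ :=
  Matrix.diagonal (fun i => if i = 0 then (-1 : ℝ) else 1)

lemma minkowski_transpose (d : ℕ) : (minkowski d)ᵀ = minkowski d :=
  Matrix.diagonal_transpose _

lemma minkowski_mul_self (d : ℕ) : minkowski d * minkowski d = 1 := by
  rw [minkowski, Matrix.diagonal_mul_diagonal]
  rw [show (fun i => (if i = (0 : Fin (d+1)) then (-1:ℝ) else 1) * (if i = 0 then (-1:ℝ) else 1)) = fun _ => 1 by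
    funext i; by_cases hi : i = 0 <;> simp [hi]]
  exact Matrix.diagonal_one

lemma dot_mink_comm (d : ℕ) (x y : Fin (d+1) → ℝ) :
    x ⬝ᵥ (minkowski d).mulVec y = (minkowski d).mulVec x ⬝ᵥ y := by
  rw [Matrix.dotProduct_mulVec, ← Matrix.mulVec_transpose, minkowski_transpose]

lemma mink_mulVec_mulVec (d : ℕ) (x : Fin (d+1) → ℝ) :
    (minkowski d).mulVec ((minkowski d).mulVec x) = x := by
  rw [Matrix.mulVec_mulVec, minkowski_mul_self, Matrix.one_mulVec]

/-- Pointwise existence and uniqueness of the Kosmann derivative: for every symmetric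
bilinear form `h` on `V` there is a unique linear map `K : V → ℝ^{d+1}` such that
(i) the bilinear form `(v, w) ↦ (K v)ᵀ η (e w)` is symmetric, and
(ii) `h(v, w) = (K v)ᵀ η (e w) + (e v)ᵀ η (K w)` for all `v, w`. -/
theorem kosmann_exists_unique
    (d : ℕ) (V : Type*) [AddCommGroup V] [Module ℝ V] [FiniteDimensional ℝ V]
    (hdim : Module.finrank ℝ V = d + 1)
    (e : V ≃ₗ[ℝ] (Fin (d + 1) → ℝ))
    (h : V →ₗ[ℝ] V →ₗ[ℝ] ℝ) (hsymm : ∀ v w : V, h v w = h w v) :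
    ∃! K : V →ₗ[ℝ] (Fin (d + 1) → ℝ),
      (∀ v w : V,
        (K v) ⬝ᵥ (minkowski d).mulVec (e w) = (K w) ⬝ᵥ (minkowski d).mulVec (e v)) ∧
      (∀ v w : V,
        h v w = (K v) ⬝ᵥ (minkowski d).mulVec (e w) +
          (e v) ⬝ᵥ (minkowski d).mulVec (K w)) := by
  -- a v ⬝ᵥ e w = h v w
  set a : V →ₗ[ℝ] (Fin (d+1) → ℝ) :=
    LinearMap.pi (fun i => h.flip (e.symm (Pi.single i 1))) with ha
  have hdecomp : ∀ w : V, (e w : Fin (d+1) → ℝ) = ∑ i, (e w i) • (Pi.single i 1 : Fin (d+1) → ℝ) := by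
    intro w; funext j
    simp [Finset.sum_apply, Pi.single_apply, Finset.sum_ite_eq']
  have key : ∀ v w : V, a v ⬝ᵥ e w = h v w := by
    intro v w
    have hrhs : h v w = ∑ i, e w i * h v (e.symm (Pi.single i 1)) := by
      conv_lhs => rw [show w = e.symm (e w) from (e.symm_apply_apply w).symm, hdecomp w]
      rw [map_sum, map_sum]
      simp only [_root_.map_smul, smul_eq_mul]
    rw [hrhs, dotProduct]
    congr 1; funext i
    simp [ha, mul_comm]
  set K : V →ₗ[ℝ] (Fin (d+1) → ℝ) :=
    (1/2 : ℝ) • ((Matrix.mulVecLin (minkowski d)).comp a) with hK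
  have hKv : ∀ v w : V, (K v) ⬝ᵥ (minkowski d).mulVec (e w) = (1/2) * h v w := by
    intro v w
    rw [dot_mink_comm]
    have : (minkowski d).mulVec (K v) = (1/2 : ℝ) • a v := by
      simp only [hK, LinearMap.smul_apply, LinearMap.comp_apply, Matrix.mulVecLin_apply]
      rw [Matrix.mulVec_smul, mink_mulVec_mulVec]
    rw [this, smul_dotProduct, key, smul_eq_mul]
  have swap : ∀ x y : Fin (d+1) → ℝ,
      x ⬝ᵥ (minkowski d).mulVec y = y ⬝ᵥ (minkowski d).mulVec x := by
    intro x y; rw [dot_mink_comm, dotProduct_comm]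
  refine ⟨K, ⟨?_, ?_⟩, ?_⟩
  · intro v w; rw [hKv, hKv, hsymm]
  · intro v w
    rw [hKv v w, swap (e v) (K w), hKv w v, hsymm w v]
    ring
  · intro K' ⟨hs, hh⟩
    ext v i
    have hdet : ∀ w : V, K' v ⬝ᵥ (minkowski d).mulVec (e w) = K v ⬝ᵥ (minkowski d).mulVec (e w) := by
      intro w
      have h2 := hh v w
      rw [swap (e v) (K' w), ← hs v w] at h2
      rw [hKv]; linarith
    have hall : ∀ y : Fin (d+1) → ℝ, K' v ⬝ᵥ y = K v ⬝ᵥ y := by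
      intro y
      have := hdet (e.symm ((minkowski d).mulVec y))
      rwa [e.apply_symm_apply, mink_mulVec_mulVec] at this
    have := hall (Pi.single i 1)
    simpa using this
end

section
/- Killing property of the Kosmann derivative: for a symmetric bilinear form h on V, the unique linear map K : V → ℝ^{d+1} with (v,w) ↦ (K v)ᵀ η (e w) symmetric and h(v,w) = (K v)ᵀ η (e w) + (e v)ᵀ η (K w) for all v,w, vanishes (K = 0) if and only if h = 0. (Pointwise form of the paper's highlighted equivalence L_ξ g = 0 ⟺ L^K_ξ e = 0, which guarantees that conserved currents of the metric and coframe formulations of gravity agree.) -/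
open Matrix

lemma minkowski_sq (d : ℕ) (x : Fin (d + 1) → ℝ) :
    (minkowski d).mulVec ((minkowski d).mulVec x) = x := by
  funext i
  simp only [minkowski, Matrix.mulVec_diagonal]
  split_ifs <;> ring

/-- Killing property of the Kosmann derivative: the unique linear map `K : V → ℝ^{d+1}`
with `(v, w) ↦ (K v)ᵀ η (e w)` symmetric and
`h(v, w) = (K v)ᵀ η (e w) + (e v)ᵀ η (K w)` vanishes if and only if `h = 0`. -/
theorem kosmann_vanishes_iff_killing
    (d : ℕ) (V : Type*) [AddCommGroup V] [Module ℝ V] [FiniteDimensional ℝ V]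
    (hdim : Module.finrank ℝ V = d + 1)
    (e : V ≃ₗ[ℝ] (Fin (d + 1) → ℝ))
    (h : V →ₗ[ℝ] V →ₗ[ℝ] ℝ) (hsymm : ∀ v w : V, h v w = h w v)
    (K : V →ₗ[ℝ] (Fin (d + 1) → ℝ))
    (hKsymm : ∀ v w : V,
      (K v) ⬝ᵥ (minkowski d).mulVec (e w) = (K w) ⬝ᵥ (minkowski d).mulVec (e v))
    (hKh : ∀ v w : V,
      h v w = (K v) ⬝ᵥ (minkowski d).mulVec (e w) +
        (e v) ⬝ᵥ (minkowski d).mulVec (K w)) :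
    K = 0 ↔ h = 0 := by
  have hsym : (minkowski d)ᵀ = minkowski d := Matrix.diagonal_transpose _
  constructor
  · intro hK
    ext v w
    simp [hKh v w, hK]
  · intro hh
    have key : ∀ v w : V, (K v) ⬝ᵥ (minkowski d).mulVec (e w) = 0 := by
      intro v w
      have h1 : (e v) ⬝ᵥ (minkowski d).mulVec (K w)
          = (K v) ⬝ᵥ (minkowski d).mulVec (e w) := by
        rw [Matrix.dotProduct_mulVec, ← Matrix.mulVec_transpose, hsym,
          dotProduct_comm, hKsymm w v]
      have h2 : h v w = 0 := by rw [hh]; rfl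
      have := hKh v w
      rw [h2, h1] at this
      linarith
    ext v i
    have := key v (e.symm ((minkowski d).mulVec (Pi.single i 1)))
    rw [e.apply_symm_apply, minkowski_sq] at this
    simpa using this
end

section
/- Smooth dependence of Gram–Schmidt on the input family: for a finite-dimensional real inner product space E and fixed n, the set of linearly independent families v : Fin n → E is open in the space of all families (with its natural finite-dimensional topology), and on this open set the maps v ↦ gramSchmidt(v) and v ↦ gramSchmidtNormed(v) are C^∞ (infinitely differentiable). (This makes precise the paper's observation that the Gram–Schmidt algorithm induces a fractional polynomial — in particular smooth — functional dependence on its inputs, ensuring that the orthonormalized vertical coframe in the Kaluza–Klein reduction is smooth.) -/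
variable {E : Type*} [NormedAddCommGroup E] [InnerProductSpace ℝ E]

/-- Mathlib's Gram–Schmidt orthogonalization `gramSchmidt ℝ` specialized to families
indexed by `Fin n`. -/
noncomputable def gramSchmidtFin {n : ℕ} (v : Fin n → E) : Fin n → E :=
  @InnerProductSpace.gramSchmidt ℝ E _ _ _ (Fin n) _ _ (inferInstanceAs (WellFoundedLT (Fin n))) v

/-- Mathlib's normalized Gram–Schmidt orthogonalization `gramSchmidtNormed ℝ`
specialized to families indexed by `Fin n`. -/
noncomputable def gramSchmidtNormedFin {n : ℕ} (v : Fin n → E) : Fin n → E :=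
  @InnerProductSpace.gramSchmidtNormed ℝ E _ _ _ (Fin n) _ _ (inferInstanceAs (WellFoundedLT (Fin n))) v

private lemma gramSchmidtFin_eq {n : ℕ} (v : Fin n → E) (i : Fin n) :
    gramSchmidtFin v i = v i - ∑ j ∈ Finset.Iio i,
      ((inner ℝ (gramSchmidtFin v j) (v i) : ℝ) / (inner ℝ (gramSchmidtFin v j) (gramSchmidtFin v j) : ℝ))
        • gramSchmidtFin v j := by
  have := @InnerProductSpace.gramSchmidt_def ℝ E _ _ _ (Fin n) _ _ (inferInstanceAs (WellFoundedLT (Fin n))) v i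
  simp only [gramSchmidtFin]
  rw [this]
  congr 1
  refine Finset.sum_congr rfl fun j _ => ?_
  rw [Submodule.starProjection_singleton, real_inner_self_eq_norm_sq]
  norm_cast

private lemma gs_ne_zero {n : ℕ} {v : Fin n → E} (hv : LinearIndependent ℝ v) (i : Fin n) :
    gramSchmidtFin v i ≠ 0 :=
  @InnerProductSpace.gramSchmidt_ne_zero ℝ E _ _ _ (Fin n) _ _ (inferInstanceAs (WellFoundedLT (Fin n))) _ i hv

private lemma gs_smooth {n : ℕ} (i : Fin n) :
    ContDiffOn ℝ (⊤ : ℕ∞) (fun v : Fin n → E => gramSchmidtFin v i)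
      {v : Fin n → E | LinearIndependent ℝ v} := by
  have H : ∀ k : ℕ, ∀ i : Fin n, (i : ℕ) < k →
      ContDiffOn ℝ (⊤ : ℕ∞) (fun v : Fin n → E => gramSchmidtFin v i)
        {v : Fin n → E | LinearIndependent ℝ v} := by
    intro k
    induction k with
    | zero => intro i hi; omega
    | succ k ih =>
      intro i hi
      have heq : (fun v : Fin n → E => gramSchmidtFin v i) =
          fun v : Fin n → E => v i - ∑ j ∈ Finset.Iio i,
            ((inner ℝ (gramSchmidtFin v j) (v i) : ℝ) /
              (inner ℝ (gramSchmidtFin v j) (gramSchmidtFin v j) : ℝ)) • gramSchmidtFin v j := by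
        funext v; exact gramSchmidtFin_eq v i
      rw [heq]
      have hproj : ContDiffOn ℝ (⊤ : ℕ∞) (fun v : Fin n → E => v i)
          {v : Fin n → E | LinearIndependent ℝ v} :=
        ((ContinuousLinearMap.proj i : (Fin n → E) →L[ℝ] E)).contDiff.contDiffOn
      refine hproj.sub (ContDiffOn.sum fun j hj => ?_)
      have hjk : (j : ℕ) < k := by
        have : j < i := Finset.mem_Iio.mp hj
        omega
      have hgs := ih j hjk
      refine ContDiffOn.smul (ContDiffOn.div (hgs.inner ℝ hproj) (hgs.inner ℝ hgs) ?_) hgs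
      intro v hv
      exact inner_self_ne_zero.mpr (gs_ne_zero hv j)
  exact H (n + 1) i (by omega)

/-- Smooth dependence of Gram–Schmidt on the input family: the set of linearly
independent families `v : Fin n → E` is open in the space of all families, and on it
the maps `v ↦ gramSchmidt v` and `v ↦ gramSchmidtNormed v` are `C^∞`. -/
theorem gramSchmidt_contDiffOn
    [FiniteDimensional ℝ E] (n : ℕ) :
    IsOpen {v : Fin n → E | LinearIndependent ℝ v} ∧
    ContDiffOn ℝ (⊤ : ℕ∞) (fun v : Fin n → E => gramSchmidtFin v)
      {v : Fin n → E | LinearIndependent ℝ v} ∧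
    ContDiffOn ℝ (⊤ : ℕ∞) (fun v : Fin n → E => gramSchmidtNormedFin v)
      {v : Fin n → E | LinearIndependent ℝ v} := by
  refine ⟨isOpen_setOf_linearIndependent, contDiffOn_pi.mpr fun i => gs_smooth i, ?_⟩
  refine contDiffOn_pi.mpr fun i => ?_
  have heq : (fun v : Fin n → E => gramSchmidtNormedFin v i) =
      fun v : Fin n → E => (‖gramSchmidtFin v i‖)⁻¹ • gramSchmidtFin v i := by
    funext v; rfl
  rw [heq]
  have hgs := gs_smooth (E := E) i
  have hne : ∀ v ∈ {v : Fin n → E | LinearIndependent ℝ v}, gramSchmidtFin v i ≠ 0 :=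
    fun v hv => gs_ne_zero hv i
  exact ((hgs.norm ℝ hne).inv (fun v hv => norm_ne_zero_iff.mpr (hne v hv))).smul hgs
end
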